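/- Let n ≥ 3 be an integer and k ∈ ℤ, and let V_k = { (x_1, …, x_n) ∈ ℤ^n : x_1 + ⋯ + x_n ∈ {k, k+1} }. Then the induced subgraph of the n-dimensional grid on V_k is n-regular and has girth exactly 6. -/

import Mathlib

/-- The `n`-dimensional grid: the unit-distance graph on `ℤ^n`. Two points are adjacent
iff they differ by exactly 1 in one coordinate and agree in all others, i.e. iff the sum
of the absolute coordinate differences is 1. -/
def grid (n : ℕ) : SimpleGraph (Fin n → ℤ) where
  Adj x y := ∑ i, |x i - y i| = 1
  symm := ⟨fun x y h => by
    rwa [Finset.sum_congr rfl fun i _ => abs_sub_comm (y i) (x i)]⟩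
  loopless := ⟨fun x h => by simp at h⟩

/-- The induced subgraph of the `n`-dimensional grid on `S` is `k`-regular:
every vertex has exactly `k` neighbours. -/
def IsRegularInduced (n : ℕ) (S : Set (Fin n → ℤ)) (k : ℕ) : Prop :=
  ∀ v : S, (((grid n).induce S).neighborSet v).ncard = k

/-! The coordinate sum changes by `±1` along every grid edge. Hence inside the slab the
neighbours of a point on the level `k` are exactly its `n` upper neighbours `x + e_i`, and those
of a point on the level `k + 1` its `n` lower neighbours `x - e_i`: the slab is `n`-regular.
Colouring by the parity of the coordinate sum makes the grid bipartite, so every cycle is even.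
In a 4-cycle `a b c d` we would have `b = a + σ e_i = c + σ e_j` and `d = a + σ e_m = c + σ e_l`
with `a ≠ c`; but `c - a = σ (e_i - e_j)` determines `i`, so `i = m` and `b = d`. Finally, the
two middle levels of a unit cube spanned by three coordinate directions form a hexagon, which
a translation moves into the slab. -/

open SimpleGraph

lemma sum_abs_eq_one_iff {ι : Type*} [Fintype ι] [DecidableEq ι] {d : ι → ℤ} :
    ∑ i, |d i| = 1 ↔ ∃ i ε, (ε = 1 ∨ ε = -1) ∧ d = Pi.single i ε := by
  constructor
  · intro h
    obtain ⟨i, hi⟩ : ∃ i, d i ≠ 0 := by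
      by_contra! h0
      simp [h0] at h
    have hsplit := Finset.add_sum_erase Finset.univ (fun j => |d j|) (Finset.mem_univ i)
    have hrest : 0 ≤ ∑ j ∈ Finset.univ.erase i, |d j| :=
      Finset.sum_nonneg fun j _ => abs_nonneg _
    have hdi : 0 < |d i| := abs_pos.mpr hi
    have hzero : ∀ j ∈ Finset.univ.erase i, |d j| = 0 :=
      (Finset.sum_eq_zero_iff_of_nonneg fun j _ => abs_nonneg _).mp (by omega)
    have hdi₁ : |d i| = 1 := by omega
    refine ⟨i, d i, abs_eq zero_le_one |>.mp hdi₁, funext fun j => ?_⟩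
    by_cases hj : j = i
    · simp [hj]
    · simpa [hj] using hzero j (by simp [hj])
  · rintro ⟨i, ε, hε, rfl⟩
    rcases hε with rfl | rfl <;> simp [Pi.single_apply, apply_ite]

lemma cycleGraph_isContained_of_adj_succ {V : Type*} {G : SimpleGraph V} {m : ℕ}
    (f : Fin (m + 2) → V) (hf : Function.Injective f) (hadj : ∀ i, G.Adj (f i) (f (i + 1))) :
    cycleGraph (m + 2) ⊑ G := by
  refine ⟨⟨⟨f, fun {i j} h => ?_⟩, hf⟩⟩
  rcases cycleGraph_adj.mp h with h | h <;> rw [sub_eq_iff_eq_add'] at h <;> subst h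
  · exact (hadj j).symm
  · exact hadj i

section Grid

variable {n : ℕ}

lemma grid_adj_iff {x y : Fin n → ℤ} :
    (grid n).Adj x y ↔ ∃ i ε, (ε = 1 ∨ ε = -1) ∧ y = x + Pi.single i ε := by
  change ∑ i, |x i - y i| = 1 ↔ _
  simp_rw [abs_sub_comm (x _), ← Pi.sub_apply y x, sum_abs_eq_one_iff, sub_eq_iff_eq_add']

lemma grid_adj_add_single (x : Fin n → ℤ) (i : Fin n) : (grid n).Adj x (x + Pi.single i 1) :=
  grid_adj_iff.mpr ⟨i, 1, .inl rfl, rfl⟩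

lemma grid_adj_single_add (x : Fin n → ℤ) (i : Fin n) : (grid n).Adj (Pi.single i 1 + x) x := by
  rw [add_comm]
  exact (grid_adj_add_single x i).symm

lemma grid_adj_add_left_iff (b x y : Fin n → ℤ) :
    (grid n).Adj (b + x) (b + y) ↔ (grid n).Adj x y := by
  simp [grid]

lemma sum_add_single (x : Fin n → ℤ) (i : Fin n) (c : ℤ) :
    ∑ j, (x + Pi.single i c : Fin n → ℤ) j = ∑ j, x j + c := by
  simp [Finset.sum_add_distrib]

lemma grid_colorable_two : (grid n).Colorable 2 := by
  refine (Coloring.mk (fun x => decide (Even (∑ i, x i))) fun hxy => ?_).colorable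
  obtain ⟨i, ε, hε, rfl⟩ := grid_adj_iff.mp hxy
  rw [ne_eq, decide_eq_decide, sum_add_single]
  rcases hε with rfl | rfl <;> simp [Int.even_add, ← Int.not_even_iff_odd]

lemma eq_of_add_single_eq_add_single {a c : Fin n → ℤ} {σ : ℤ} (hσ : σ ≠ 0) (hac : a ≠ c)
    {i j m l : Fin n} (h₁ : a + Pi.single i σ = c + Pi.single j σ)
    (h₂ : a + Pi.single m σ = c + Pi.single l σ) : i = m := by
  have hij : i ≠ j := by
    rintro rfl
    exact hac (add_right_cancel h₁)
  have e₁ := congrFun h₁ i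
  have e₂ := congrFun h₂ i
  by_contra him
  simp only [Pi.add_apply, Pi.single_apply, ite_true, hij, him, ite_false] at e₁ e₂
  split_ifs at e₂ <;> omega

end Grid

def slab (n : ℕ) (k : ℤ) : Set (Fin n → ℤ) := {x | (∑ i, x i) = k ∨ (∑ i, x i) = k + 1}

abbrev slabGraph (n : ℕ) (k : ℤ) : SimpleGraph (slab n k) := (grid n).induce (slab n k)

section Slab

variable {n : ℕ} {k : ℤ}

/-- The direction in which all slab neighbours of `x` lie: up from the level `k`,
down from the level `k + 1`. -/
def slabSign (k : ℤ) (x : Fin n → ℤ) : ℤ := if ∑ i, x i = k then 1 else -1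

lemma mem_slab_iff {x : Fin n → ℤ} : x ∈ slab n k ↔ ∑ i, x i = k ∨ ∑ i, x i = k + 1 := Iff.rfl

lemma slabSign_eq_one_or_neg_one (x : Fin n → ℤ) : slabSign k x = 1 ∨ slabSign k x = -1 := by
  unfold slabSign
  split_ifs <;> simp

lemma slabSign_ne_zero (x : Fin n → ℤ) : slabSign k x ≠ 0 := by
  rcases slabSign_eq_one_or_neg_one (k := k) x with h | h <;> simp [h]

lemma add_single_mem_slab_iff {x : Fin n → ℤ} (hx : x ∈ slab n k) (i : Fin n) {ε : ℤ}
    (hε : ε = 1 ∨ ε = -1) : x + Pi.single i ε ∈ slab n k ↔ ε = slabSign k x := by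
  simp only [mem_slab_iff, slabSign, sum_add_single] at hx ⊢
  split_ifs <;> omega

lemma slabGraph_adj_iff {u v : slab n k} :
    (slabGraph n k).Adj u v ↔
      ∃ i, (v : Fin n → ℤ) = (u : Fin n → ℤ) + Pi.single i (slabSign k (u : Fin n → ℤ)) := by
  constructor
  · intro h
    obtain ⟨i, ε, hε, hv⟩ := grid_adj_iff.mp (induce_adj.mp h)
    have hmem : (u : Fin n → ℤ) + Pi.single i ε ∈ slab n k := hv ▸ v.2
    exact ⟨i, by rw [hv, (add_single_mem_slab_iff u.2 i hε).mp hmem]⟩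
  · rintro ⟨i, hv⟩
    exact grid_adj_iff.mpr ⟨i, _, slabSign_eq_one_or_neg_one _, hv⟩

lemma slabSign_eq_of_adj_of_adj {a b c : slab n k} (hab : (slabGraph n k).Adj a b)
    (hcb : (slabGraph n k).Adj c b) :
    slabSign k (a : Fin n → ℤ) = slabSign k (c : Fin n → ℤ) := by
  obtain ⟨i, hi⟩ := slabGraph_adj_iff.mp hab
  obtain ⟨j, hj⟩ := slabGraph_adj_iff.mp hcb
  have hsum := congrArg (fun x : Fin n → ℤ => ∑ t, x t) (hi.symm.trans hj)
  have ha := a.2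
  have hc := c.2
  simp only [mem_slab_iff, slabSign, sum_add_single] at hsum ha hc ⊢
  split_ifs at hsum ⊢ <;> omega

lemma ncard_neighborSet_slabGraph (v : slab n k) :
    ((slabGraph n k).neighborSet v).ncard = n := by
  let f : Fin n → slab n k := fun i =>
    ⟨(v : Fin n → ℤ) + Pi.single i (slabSign k (v : Fin n → ℤ)),
      (add_single_mem_slab_iff v.2 i (slabSign_eq_one_or_neg_one _)).mpr rfl⟩
  have hf : Function.Injective f := fun i j h => by
    by_contra hij
    have hi := congrFun (congrArg Subtype.val h) i
    simp [f, Ne.symm hij, slabSign_ne_zero] at hi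
  have hrange : (slabGraph n k).neighborSet v = Set.range f := by
    ext w
    simp only [mem_neighborSet, slabGraph_adj_iff, Set.mem_range, f, Subtype.ext_iff, eq_comm]
  rw [hrange, Set.ncard_range_of_injective hf, Nat.card_eq_fintype_card, Fintype.card_fin]

lemma not_cycleGraph_four_isContained_slabGraph : ¬ cycleGraph 4 ⊑ slabGraph n k := by
  rintro ⟨φ⟩
  have hadj {i j : Fin 4} (h : (cycleGraph 4).Adj i j) : (slabGraph n k).Adj (φ i) (φ j) :=
    φ.toHom.map_adj h
  have hne {i j : Fin 4} (h : i ≠ j) : (φ i : Fin n → ℤ) ≠ φ j :=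
    fun hij => h (φ.injective (Subtype.ext hij))
  obtain ⟨i, hb⟩ := slabGraph_adj_iff.mp (hadj (i := 0) (j := 1) (by decide))
  obtain ⟨j, hb'⟩ := slabGraph_adj_iff.mp (hadj (i := 2) (j := 1) (by decide))
  obtain ⟨m, hd⟩ := slabGraph_adj_iff.mp (hadj (i := 0) (j := 3) (by decide))
  obtain ⟨l, hd'⟩ := slabGraph_adj_iff.mp (hadj (i := 2) (j := 3) (by decide))
  have hσ := slabSign_eq_of_adj_of_adj (hadj (i := 0) (j := 1) (by decide))
    (hadj (i := 2) (j := 1) (by decide))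
  rw [← hσ] at hb' hd'
  have him := eq_of_add_single_eq_add_single (slabSign_ne_zero _)
    (hne (by decide : (0 : Fin 4) ≠ 2)) (hb.symm.trans hb') (hd.symm.trans hd')
  exact hne (by decide : (1 : Fin 4) ≠ 3) (by rw [hb, hd, him])

lemma cycleGraph_six_isContained_slabGraph {i j l : Fin n} (hij : i ≠ j) (hjl : j ≠ l)
    (hil : i ≠ l) (k : ℤ) : cycleGraph 6 ⊑ slabGraph n k := by
  let e : Fin n → Fin n → ℤ := fun t => Pi.single t 1
  -- the middle levels (sums 1 and 2) of the unit cube on `e i, e j, e l`; `base` shifts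
  -- them to the levels `k` and `k + 1`
  let P : Fin 6 → Fin n → ℤ := ![e i, e i + e j, e j, e j + e l, e l, e l + e i]
  let base : Fin n → ℤ := Pi.single i (k - 1)
  have hmem (t : Fin 6) : base + P t ∈ slab n k := by
    fin_cases t <;> simp [mem_slab_iff, base, P, e, Finset.sum_add_distrib] <;> omega
  have hP : Function.Injective P := by
    let read (x : Fin n → ℤ) : ℤ × ℤ × ℤ := (x i, x j, x l)
    have hread :
        read ∘ P = ![(1, 0, 0), (1, 1, 0), (0, 1, 0), (0, 1, 1), (0, 0, 1), (1, 0, 1)] := by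
      funext t
      fin_cases t <;> simp [read, P, e, hij, hjl, hil, hij.symm, hjl.symm, hil.symm]
    refine Function.Injective.of_comp (f := read) ?_
    rw [hread]
    decide
  refine cycleGraph_isContained_of_adj_succ (Set.codRestrict (fun t => base + P t) _ hmem)
    (((add_right_injective base).comp hP).codRestrict hmem) fun t => ?_
  change (grid n).Adj (base + P t) (base + P (t + 1))
  rw [grid_adj_add_left_iff]
  fin_cases t
  exacts [grid_adj_add_single _ _, grid_adj_single_add _ _, grid_adj_add_single _ _,
    grid_adj_single_add _ _, grid_adj_add_single _ _, grid_adj_single_add _ _]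

lemma egirth_slabGraph (hn : 3 ≤ n) (k : ℤ) : (slabGraph n k).egirth = 6 := by
  refine le_antisymm ?_ (le_egirth.mpr fun a w hw => ?_)
  · obtain ⟨a, w, hw, hlen⟩ := (cycleGraph_isContained_iff (by norm_num)).mp <|
      cycleGraph_six_isContained_slabGraph (i := (⟨0, by omega⟩ : Fin n))
        (j := ⟨1, by omega⟩) (l := ⟨2, by omega⟩) (by simp) (by simp) (by simp) k
    simpa [hlen] using egirth_le_length hw
  · have heven : Even w.length := two_colorable_iff_forall_loop_even.mp
      (grid_colorable_two.of_hom (Embedding.induce _).toHom) a w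
    have hne_four : w.length ≠ 4 := fun h => not_cycleGraph_four_isContained_slabGraph
      ((cycleGraph_isContained_iff (by norm_num)).mpr ⟨a, w, hw, h⟩)
    have hthree := hw.three_le_length
    obtain ⟨m, hm⟩ := heven
    exact_mod_cast (by omega : 6 ≤ w.length)

end Slab

theorem slab_regular_girth_six (n : ℕ) (hn : 3 ≤ n) (k : ℤ)
    (S : Set (Fin n → ℤ))
    (hS : S = {x | (∑ i, x i) = k ∨ (∑ i, x i) = k + 1}) :
    IsRegularInduced n S n ∧ ((grid n).induce S).egirth = 6 := by
  subst hS
  exact ⟨ncard_neighborSet_slabGraph, egirth_slabGraph hn k⟩
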